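/- arXiv:2108.09901 — 5 statements merged into one kernel-verified Lean document; each statement's English description precedes it below -/
import Mathlib

section
/- The function h₂(q) = -ln(q²)/(1-q²) is strictly decreasing (strictly antitone) on the open interval (0,1) and strictly increasing (strictly monotone) on the open interval (-1,0). -/
lemma g_anti : StrictAntiOn (fun t : ℝ => -Real.log t / (1 - t)) (Set.Ioo 0 1) := by
  apply strictAntiOn_of_deriv_neg (convex_Ioo 0 1)
  · apply ContinuousOn.div
    · exact (Real.continuousOn_log.mono (by
        intro x hx
        exact ne_of_gt hx.1)).neg
    · fun_prop
    · intro x hx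
      have := hx.2
      intro h
      linarith [hx.2, sub_eq_zero.mp h]
  · rw [interior_Ioo]
    intro t ht
    have ht0 : (0:ℝ) < t := ht.1
    have ht1 : t < 1 := ht.2
    have hne : (1:ℝ) - t ≠ 0 := by intro h; linarith [sub_eq_zero.mp h]
    have h1 : HasDerivAt (fun t : ℝ => -Real.log t) (-(1/t)) t := by
      rw [one_div]; exact (Real.hasDerivAt_log (ne_of_gt ht0)).neg
    have h2 : HasDerivAt (fun t : ℝ => 1 - t) (-1) t := by
      simpa using (hasDerivAt_id t).const_sub 1
    have h3 : HasDerivAt (fun t : ℝ => -Real.log t / (1 - t)) _ t := h1.div h2 hne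
    rw [h3.deriv]
    have hlog : 1 - t⁻¹ < Real.log t := by
      have h4 : Real.log (1/t) < 1/t - 1 :=
        Real.log_lt_sub_one_of_pos (by positivity) (by
          intro h
          have : t = 1 := by field_simp at h; linarith
          linarith)
      rw [one_div, Real.log_inv] at h4
      linarith
    have hden : (0:ℝ) < (1 - t)^2 := by positivity
    apply div_neg_of_neg_of_pos _ hden
    have ht0' : t ≠ 0 := ne_of_gt ht0
    have heq : -(1/t) * (1 - t) - -Real.log t * -1 = (1 - t⁻¹) - Real.log t := by
      field_simp
      ring
    rw [heq]
    linarith [hlog]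

/-- `h₂(q) = -ln(q²)/(1-q²)` is strictly decreasing on `(0,1)` and
strictly increasing on `(-1,0)`. -/
theorem stmt6 :
    StrictAntiOn (fun q : ℝ => -Real.log (q ^ 2) / (1 - q ^ 2)) (Set.Ioo 0 1) ∧
    StrictMonoOn (fun q : ℝ => -Real.log (q ^ 2) / (1 - q ^ 2)) (Set.Ioo (-1) 0) := by
  have hf : StrictAntiOn (fun q : ℝ => -Real.log (q ^ 2) / (1 - q ^ 2)) (Set.Ioo 0 1) := by
    intro a ha b hb hab
    have ha2 : a ^ 2 ∈ Set.Ioo (0:ℝ) 1 := ⟨pow_pos ha.1 2, by nlinarith [ha.1, ha.2]⟩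
    have hb2 : b ^ 2 ∈ Set.Ioo (0:ℝ) 1 := ⟨pow_pos hb.1 2, by nlinarith [hb.1, hb.2]⟩
    exact g_anti ha2 hb2 (by nlinarith [ha.1])
  refine ⟨hf, ?_⟩
  intro a ha b hb hab
  have hb' : -b ∈ Set.Ioo (0:ℝ) 1 := ⟨by linarith [hb.2], by linarith [ha.1, hab]⟩
  have ha' : -a ∈ Set.Ioo (0:ℝ) 1 := ⟨by linarith [hb.2, hab], by linarith [ha.1]⟩
  have := hf hb' ha' (by linarith)
  simpa [neg_pow] using this
end

section
/- Let p, m ≥ 1, let W : ℝ → (p×m real matrices) be continuous, and let b > 0, ν > 0, t_s ≥ 0, t_c > 0 with T = t_s + t_c. If the m×m matrix ∫_{t_s}^{T} W(τ)ᵀW(τ) dτ - ν·I_m is positive semidefinite, then the matrix ∫₀^{T} e^{-b(T-τ)}·W(τ)ᵀW(τ) dτ - ν·e^{-b·t_c}·I_m is positive semidefinite. -/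
open Matrix

lemma quad_integral {m : ℕ} (M : ℝ → Matrix (Fin m) (Fin m) ℝ) (a c : ℝ)
    (hM : ∀ i j, Continuous fun τ => M τ i j)
    (x : Fin m → ℝ) :
    x ⬝ᵥ (Matrix.of fun i j => ∫ τ in a..c, M τ i j) *ᵥ x
      = ∫ τ in a..c, x ⬝ᵥ (M τ) *ᵥ x := by
  have h1 : ∀ i j, IntervalIntegrable (fun τ => x i * (M τ i j * x j))
      MeasureTheory.volume a c :=
    fun i j => (continuous_const.mul ((hM i j).mul continuous_const)).intervalIntegrable a c
  have h2 : ∀ i : Fin m, IntervalIntegrable (fun τ => ∑ j, x i * (M τ i j * x j))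
      MeasureTheory.volume a c := by
    intro i
    apply Continuous.intervalIntegrable
    exact continuous_finset_sum _ fun j _ => continuous_const.mul ((hM i j).mul continuous_const)
  have e1 : ∀ i j, x i * ((∫ τ in a..c, M τ i j) * x j)
      = ∫ τ in a..c, x i * (M τ i j * x j) := by
    intro i j
    rw [← intervalIntegral.integral_mul_const, ← intervalIntegral.integral_const_mul]
  have e2 : ∀ i, (∑ j, ∫ τ in a..c, x i * (M τ i j * x j))
      = ∫ τ in a..c, ∑ j, x i * (M τ i j * x j) := fun i =>
    (intervalIntegral.integral_finset_sum (fun j _ => h1 i j)).symm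
  have e3 : (∑ i, ∫ τ in a..c, ∑ j, x i * (M τ i j * x j))
      = ∫ τ in a..c, ∑ i, ∑ j, x i * (M τ i j * x j) :=
    (intervalIntegral.integral_finset_sum (fun i _ => h2 i)).symm
  simp only [dotProduct, mulVec, Matrix.of_apply, Finset.mul_sum]
  calc (∑ i, ∑ j, x i * ((∫ τ in a..c, M τ i j) * x j))
      = ∑ i, ∑ j, ∫ τ in a..c, x i * (M τ i j * x j) :=
        Finset.sum_congr rfl fun i _ => Finset.sum_congr rfl fun j _ => e1 i j
    _ = ∑ i, ∫ τ in a..c, ∑ j, x i * (M τ i j * x j) :=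
        Finset.sum_congr rfl fun i _ => e2 i
    _ = ∫ τ in a..c, ∑ i, ∑ j, x i * (M τ i j * x j) := e3

/-- Eq. (36): if `∫_{t_s}^{t_s+t_c} WᵀW dτ ⪰ ν I`, then
`∫₀^{t_s+t_c} e^{-b(t_s+t_c-τ)} WᵀW dτ ⪰ ν e^{-b t_c} I`. -/
theorem stmt11 {p m : ℕ} (hp : 1 ≤ p) (hm : 1 ≤ m)
    (W : ℝ → Matrix (Fin p) (Fin m) ℝ)
    (hW : ∀ i j, Continuous fun t => W t i j)
    (b ν ts tc : ℝ) (hb : 0 < b) (hν : 0 < ν) (hts : 0 ≤ ts) (htc : 0 < tc)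
    (hIE : Matrix.PosSemidef
      ((Matrix.of fun i j => ∫ τ in ts..(ts + tc), ((W τ)ᵀ * W τ) i j)
        - ν • (1 : Matrix (Fin m) (Fin m) ℝ))) :
    Matrix.PosSemidef
      ((Matrix.of fun i j =>
          ∫ τ in (0:ℝ)..(ts + tc), Real.exp (-b * (ts + tc - τ)) * ((W τ)ᵀ * W τ) i j)
        - (ν * Real.exp (-b * tc)) • (1 : Matrix (Fin m) (Fin m) ℝ)) := by
  set T := ts + tc with hT
  -- continuity of the entries of WᵀW
  have hWW : ∀ i j, Continuous fun τ => ((W τ)ᵀ * W τ) i j := by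
    intro i j
    simp only [Matrix.mul_apply, Matrix.transpose_apply]
    exact continuous_finset_sum _ fun k _ => (hW k i).mul (hW k j)
  -- symmetry of entries
  have hsym : ∀ τ (i j : Fin m), ((W τ)ᵀ * W τ) j i = ((W τ)ᵀ * W τ) i j := by
    intro τ i j
    simp only [Matrix.mul_apply, Matrix.transpose_apply]
    exact Finset.sum_congr rfl fun k _ => mul_comm _ _
  -- nonnegativity of the quadratic form Q τ x
  have hQ0 : ∀ (x : Fin m → ℝ) τ, 0 ≤ x ⬝ᵥ ((W τ)ᵀ * W τ) *ᵥ x := by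
    intro x τ
    have h := (Matrix.posSemidef_conjTranspose_mul_self (W τ)).dotProduct_mulVec_nonneg x
    have hct : (W τ)ᴴ = (W τ)ᵀ := by
      ext i j; simp [Matrix.conjTranspose_apply]
    rw [hct] at h
    simpa using h
  refine Matrix.posSemidef_iff_dotProduct_mulVec.mpr ⟨?_, ?_⟩
  · -- Hermitian
    apply Matrix.IsHermitian.sub
    · show _ = _
      ext i j
      simp only [Matrix.conjTranspose_apply, Matrix.of_apply, star_trivial]
      exact intervalIntegral.integral_congr fun τ _ => by rw [hsym]
    · show _ = _
      ext i j
      simp [Matrix.conjTranspose_apply, Matrix.one_apply, eq_comm]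
  · intro x
    have hcont : ∀ i j, Continuous fun τ =>
        (Matrix.of fun i j => Real.exp (-b * (T - τ)) * ((W τ)ᵀ * W τ) i j : Matrix (Fin m) (Fin m) ℝ) i j := by
      intro i j
      simp only [Matrix.of_apply]
      exact (Real.continuous_exp.comp (by continuity)).mul (hWW i j)
    -- rewrite quadratic forms as integrals
    have key1 := quad_integral (fun τ => Matrix.of fun i j =>
        Real.exp (-b * (T - τ)) * ((W τ)ᵀ * W τ) i j) 0 T hcont x
    have key2 := quad_integral (fun τ => (W τ)ᵀ * W τ) ts T hWW x
    -- quadratic form of the scaled matrix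
    have hscale : ∀ τ, x ⬝ᵥ (Matrix.of fun i j =>
        Real.exp (-b * (T - τ)) * ((W τ)ᵀ * W τ) i j : Matrix (Fin m) (Fin m) ℝ) *ᵥ x
        = Real.exp (-b * (T - τ)) * (x ⬝ᵥ ((W τ)ᵀ * W τ) *ᵥ x) := by
      intro τ
      have : (Matrix.of fun i j => Real.exp (-b * (T - τ)) * ((W τ)ᵀ * W τ) i j :
          Matrix (Fin m) (Fin m) ℝ) = Real.exp (-b * (T - τ)) • ((W τ)ᵀ * W τ) := by
        ext i j; simp [Matrix.smul_apply]
      rw [this, Matrix.smul_mulVec, dotProduct_smul, smul_eq_mul]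
    -- the quadratic form from hIE
    have hIEx := hIE.dotProduct_mulVec_nonneg x
    simp only [star_trivial, Matrix.sub_mulVec, dotProduct_sub,
      Matrix.smul_mulVec, Matrix.one_mulVec, dotProduct_smul,
      smul_eq_mul, sub_nonneg] at hIEx ⊢
    simp only [Matrix.of_apply] at key1
    rw [key2] at hIEx
    rw [key1]
    -- continuity of Q
    have hQc : Continuous fun τ => x ⬝ᵥ ((W τ)ᵀ * W τ) *ᵥ x := by
      simp only [dotProduct, Matrix.mulVec]
      exact continuous_finset_sum _ fun i _ => continuous_const.mul
        (continuous_finset_sum _ fun j _ => (hWW i j).mul continuous_const)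
    have hEc : Continuous fun τ => Real.exp (-b * (T - τ)) * (x ⬝ᵥ ((W τ)ᵀ * W τ) *ᵥ x) :=
      (Real.continuous_exp.comp (by continuity)).mul hQc
    -- rewrite integrand using hscale
    have hre : (∫ τ in (0:ℝ)..T, x ⬝ᵥ (Matrix.of fun i j =>
        Real.exp (-b * (T - τ)) * ((W τ)ᵀ * W τ) i j : Matrix (Fin m) (Fin m) ℝ) *ᵥ x)
        = ∫ τ in (0:ℝ)..T, Real.exp (-b * (T - τ)) * (x ⬝ᵥ ((W τ)ᵀ * W τ) *ᵥ x) :=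
      intervalIntegral.integral_congr fun τ _ => hscale τ
    rw [hre]
    set e := Real.exp (-b * tc) with he
    have he0 : 0 < e := Real.exp_pos _
    have htsT : ts ≤ T := by rw [hT]; linarith
    -- split the integral
    have hsplit : (∫ τ in (0:ℝ)..T, Real.exp (-b * (T - τ)) * (x ⬝ᵥ ((W τ)ᵀ * W τ) *ᵥ x))
        = (∫ τ in (0:ℝ)..ts, Real.exp (-b * (T - τ)) * (x ⬝ᵥ ((W τ)ᵀ * W τ) *ᵥ x))
        + ∫ τ in ts..T, Real.exp (-b * (T - τ)) * (x ⬝ᵥ ((W τ)ᵀ * W τ) *ᵥ x) :=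
      (intervalIntegral.integral_add_adjacent_intervals
        (hEc.intervalIntegrable 0 ts) (hEc.intervalIntegrable ts T)).symm
    have h0 : 0 ≤ ∫ τ in (0:ℝ)..ts, Real.exp (-b * (T - τ)) * (x ⬝ᵥ ((W τ)ᵀ * W τ) *ᵥ x) :=
      intervalIntegral.integral_nonneg hts fun τ _ =>
        mul_nonneg (Real.exp_pos _).le (hQ0 x τ)
    have hmono : (∫ τ in ts..T, e * (x ⬝ᵥ ((W τ)ᵀ * W τ) *ᵥ x))
        ≤ ∫ τ in ts..T, Real.exp (-b * (T - τ)) * (x ⬝ᵥ ((W τ)ᵀ * W τ) *ᵥ x) := by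
      apply intervalIntegral.integral_mono_on htsT
        ((continuous_const.mul hQc).intervalIntegrable ts T)
        (hEc.intervalIntegrable ts T)
      intro τ hτ
      have h1 : -b * tc ≤ -b * (T - τ) := by
        have : T - τ ≤ tc := by rw [hT] at *; linarith [hτ.1]
        nlinarith
      exact mul_le_mul_of_nonneg_right (Real.exp_le_exp.2 h1) (hQ0 x τ)
    have hconst : (∫ τ in ts..T, e * (x ⬝ᵥ ((W τ)ᵀ * W τ) *ᵥ x))
        = e * ∫ τ in ts..T, x ⬝ᵥ ((W τ)ᵀ * W τ) *ᵥ x :=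
      intervalIntegral.integral_const_mul _ _
    rw [hconst] at hmono
    calc ν * e * (x ⬝ᵥ x) = e * (ν * (x ⬝ᵥ x)) := by ring
      _ ≤ e * ∫ τ in ts..T, x ⬝ᵥ ((W τ)ᵀ * W τ) *ᵥ x :=
          mul_le_mul_of_nonneg_left hIEx he0.le
      _ ≤ ∫ τ in ts..T, Real.exp (-b * (T - τ)) * (x ⬝ᵥ ((W τ)ᵀ * W τ) *ᵥ x) := hmono
      _ ≤ _ := by rw [hsplit]; linarith
end

section
/- Let J be a 3×3 real matrix, θ ∈ ℝ⁶, a > 0, let ω, u : ℝ → ℝ³ with ω differentiable and u continuous, and let W : ℝ → (3×6 real matrices) be continuous, such that J·ω'(t) = W(t)·θ + u(t) for all t ≥ 0. Let ω_f : ℝ → ℝ³, W_f : ℝ → (3×6 real matrices), and u_f : ℝ → ℝ³ be differentiable and satisfy ω_f' = -a·ω_f + ω, W_f' = -a·W_f + W, u_f' = -a·u_f + u, with ω_f(0) = ω(0)/a, W_f(0) = 0, u_f(0) = 0. Then J·ω_f'(t) = W_f(t)·θ + u_f(t) for all t ≥ 0. -/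
open Matrix

/-- Eq. (28): passing the rigid-body dynamics `Jω' = Wθ + u` through the stable
filter `1/(s+a)` with initial conditions `ω_f(0) = ω(0)/a`, `W_f(0) = 0`,
`u_f(0) = 0` yields the filtered regressor equation `Jω_f' = W_f θ + u_f`
(where `ω_f' = -a ω_f + ω`) for all `t ≥ 0`. -/
theorem stmt13 (J : Matrix (Fin 3) (Fin 3) ℝ) (θ : Fin 6 → ℝ) (a : ℝ) (ha : 0 < a)
    (ω u dω : ℝ → Fin 3 → ℝ) (W : ℝ → Matrix (Fin 3) (Fin 6) ℝ)
    (hω : ∀ t, HasDerivAt ω (dω t) t)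
    (hu : Continuous u) (hW : ∀ i j, Continuous fun t => W t i j)
    (hdyn : ∀ t, 0 ≤ t → J *ᵥ dω t = W t *ᵥ θ + u t)
    (ωf uf : ℝ → Fin 3 → ℝ) (Wf : ℝ → Matrix (Fin 3) (Fin 6) ℝ)
    (hωf : ∀ t, HasDerivAt ωf (-a • ωf t + ω t) t)
    (hWf : ∀ i j t, HasDerivAt (fun s => Wf s i j) (-a * Wf t i j + W t i j) t)
    (huf : ∀ t, HasDerivAt uf (-a • uf t + u t) t)
    (hωf0 : ωf 0 = a⁻¹ • ω 0) (hWf0 : Wf 0 = 0) (huf0 : uf 0 = 0) :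
    ∀ t, 0 ≤ t → J *ᵥ (-a • ωf t + ω t) = Wf t *ᵥ θ + uf t := by
  intro t ht
  funext i
  -- component notations
  set P : ℝ → ℝ := fun s => ∑ j, Wf s i j * θ j with hP
  set Q : ℝ → ℝ := fun s => uf s i with hQ
  set R : ℝ → ℝ := fun s => ∑ k, J i k * ωf s k with hR
  set T : ℝ → ℝ := fun s => ∑ k, J i k * ω s k with hT
  set g : ℝ → ℝ := fun s => Real.exp (a * s) * (P s + Q s + a * R s - T s) with hg
  -- derivative of g at any point
  have key : ∀ x : ℝ, HasDerivAt g
      (a * Real.exp (a * x) * (P x + Q x + a * R x - T x) +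
        Real.exp (a * x) *
          ((∑ j, (-a * Wf x i j + W x i j) * θ j) + (-a * Q x + u x i) +
            a * (∑ k, J i k * (-a * ωf x k + ω x k)) - ∑ k, J i k * dω x k)) x := by
    intro x
    have hexp : HasDerivAt (fun s => Real.exp (a * s)) (a * Real.exp (a * x)) x := by
      simpa [mul_comm, Function.comp_def] using (Real.hasDerivAt_exp (a * x)).comp x ((hasDerivAt_id x).const_mul a)
    have hA : HasDerivAt P (∑ j, (-a * Wf x i j + W x i j) * θ j) x :=
      HasDerivAt.fun_sum fun j _ => (hWf i j x).mul_const (θ j)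
    have hB : HasDerivAt Q (-a * Q x + u x i) x := by
      have := hasDerivAt_pi.mp (huf x) i
      simpa [hQ] using this
    have hRk : ∀ k, HasDerivAt (fun s => ωf s k) (-a * ωf x k + ω x k) x := by
      intro k
      have := hasDerivAt_pi.mp (hωf x) k
      simpa using this
    have hC : HasDerivAt R (∑ k, J i k * (-a * ωf x k + ω x k)) x :=
      HasDerivAt.fun_sum fun k _ => (hRk k).const_mul (J i k)
    have hD : HasDerivAt T (∑ k, J i k * dω x k) x := by
      refine HasDerivAt.fun_sum fun k _ => ?_
      have := hasDerivAt_pi.mp (hω x) k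
      exact this.const_mul (J i k)
    have hinner : HasDerivAt (fun s => P s + Q s + a * R s - T s)
        ((∑ j, (-a * Wf x i j + W x i j) * θ j) + (-a * Q x + u x i) +
          a * (∑ k, J i k * (-a * ωf x k + ω x k)) - ∑ k, J i k * dω x k) x :=
      ((hA.add hB).add (hC.const_mul a)).sub hD
    exact hexp.mul hinner
  -- the derivative is zero for x ≥ 0
  have hzero : ∀ x : ℝ, 0 ≤ x → HasDerivWithinAt g 0 (Set.Ici x) x := by
    intro x hx
    have hd : (∑ k, J i k * dω x k) = (∑ j, W x i j * θ j) + u x i := by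
      have := congrFun (hdyn x hx) i
      simpa [Matrix.mulVec, dotProduct] using this
    have e1 : a * P x + (∑ j, (-a * Wf x i j + W x i j) * θ j) = ∑ j, W x i j * θ j := by
      rw [hP, Finset.mul_sum, ← Finset.sum_add_distrib]
      exact Finset.sum_congr rfl fun j _ => by ring
    have e2 : a * R x + (∑ k, J i k * (-a * ωf x k + ω x k)) = T x := by
      rw [hR, hT, Finset.mul_sum, ← Finset.sum_add_distrib]
      exact Finset.sum_congr rfl fun k _ => by ring
    have h0 : a * Real.exp (a * x) * (P x + Q x + a * R x - T x) +
        Real.exp (a * x) *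
          ((∑ j, (-a * Wf x i j + W x i j) * θ j) + (-a * Q x + u x i) +
            a * (∑ k, J i k * (-a * ωf x k + ω x k)) - ∑ k, J i k * dω x k) = 0 := by
      have inner0 : a * (P x + Q x + a * R x - T x) +
          ((∑ j, (-a * Wf x i j + W x i j) * θ j) + (-a * Q x + u x i) +
            a * (∑ k, J i k * (-a * ωf x k + ω x k)) - ∑ k, J i k * dω x k) = 0 := by
        linear_combination e1 + a * e2 - hd
      linear_combination Real.exp (a * x) * inner0
    exact h0 ▸ (key x).hasDerivWithinAt
  -- g is constant on [0, t], so g t = g 0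
  have hconst : g t = g 0 := by
    refine constant_of_has_deriv_right_zero
      (fun x _ => (key x).continuousAt.continuousWithinAt)
      (fun x hx => hzero x hx.1) t ⟨ht, le_refl t⟩
  -- g 0 = 0
  have hg0 : g 0 = 0 := by
    have hP0 : P 0 = 0 := by simp [hP, hWf0]
    have hQ0 : Q 0 = 0 := by simp [hQ, huf0]
    have hR0 : a * R 0 = T 0 := by
      rw [hR, hT, Finset.mul_sum]
      refine Finset.sum_congr rfl fun k _ => ?_
      rw [hωf0]
      rw [Pi.smul_apply, smul_eq_mul, ← mul_assoc, ← mul_assoc, mul_comm a (J i k),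
        mul_assoc (J i k) a a⁻¹, mul_inv_cancel₀ (ne_of_gt ha), mul_one]
    simp [hg, hP0, hQ0, hR0]
  -- conclude
  have hgt : P t + Q t + a * R t - T t = 0 := by
    have := hconst.trans hg0
    have hexpne : Real.exp (a * t) ≠ 0 := Real.exp_ne_zero _
    simp only [hg] at this
    rcases mul_eq_zero.mp this with h | h
    · exact absurd h hexpne
    · exact h
  have esplit : (∑ k, J i k * (-a * ωf t k + ω t k)) = T t - a * R t := by
    rw [hT, hR, Finset.mul_sum, ← Finset.sum_sub_distrib]
    exact Finset.sum_congr rfl fun k _ => by ring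
  show (J *ᵥ (-a • ωf t + ω t)) i = (Wf t *ᵥ θ + uf t) i
  have lhs_eq : (J *ᵥ (-a • ωf t + ω t)) i = ∑ k, J i k * (-a * ωf t k + ω t k) := by
    simp [Matrix.mulVec, dotProduct]
  have rhs_eq : (Wf t *ᵥ θ + uf t) i = P t + Q t := by
    simp [Matrix.mulVec, dotProduct, hP, hQ]
  rw [lhs_eq, rhs_eq, esplit]
  linarith
end

section
/- Define L : ℝ³ → (3×6 real matrices) by L(x) = [[x₁,0,0,0,x₃,x₂],[0,x₂,0,x₃,0,x₁],[0,0,x₃,x₂,x₁,0]] and ω̄ : ℝ³ → ℝ⁶ by ω̄(ω) = (ω₁²/2, ω₂²/2, ω₃²/2, ω₂ω₃, ω₁ω₃, ω₁ω₂). Then for every fixed y ∈ ℝ³ and k_p ∈ ℝ, the map μ₁ : ℝ³ → ℝ⁶, μ₁(ω) = L(y)ᵀ·ω + k_p·ω̄(ω), is differentiable on ℝ³ and its derivative (Jacobian) at every ω ∈ ℝ³ is the linear map v ↦ (k_p·L(ω) + L(y))ᵀ·v. -/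
open Matrix

/-- The linear regression operator `L` of Eq. (7). -/
noncomputable def Lreg (x : Fin 3 → ℝ) : Matrix (Fin 3) (Fin 6) ℝ :=
  Matrix.of
    ![![x 0, 0, 0, 0, x 2, x 1],
      ![0, x 1, 0, x 2, 0, x 0],
      ![0, 0, x 2, x 1, x 0, 0]]

/-- `ω̄` of Eq. (20). -/
noncomputable def omegaBar (ω : Fin 3 → ℝ) : Fin 6 → ℝ :=
  ![ω 0 ^ 2 / 2, ω 1 ^ 2 / 2, ω 2 ^ 2 / 2, ω 1 * ω 2, ω 0 * ω 2, ω 0 * ω 1]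

section aux
variable {α : Type*} (a b c d e f : α)
lemma vsix0 : ![a,b,c,d,e,f] 0 = a := rfl
lemma vsix1 : ![a,b,c,d,e,f] 1 = b := rfl
lemma vsix2 : ![a,b,c,d,e,f] 2 = c := rfl
lemma vsix3 : ![a,b,c,d,e,f] 3 = d := rfl
lemma vsix4 : ![a,b,c,d,e,f] 4 = e := rfl
lemma vsix5 : ![a,b,c,d,e,f] 5 = f := rfl
lemma vth0 : ![a,b,c] 0 = a := rfl
lemma vth1 : ![a,b,c] 1 = b := rfl
lemma vth2 : ![a,b,c] 2 = c := rfl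
end aux

lemma omegaBar_hasFDerivAt (ω : Fin 3 → ℝ) :
    HasFDerivAt omegaBar
      (LinearMap.toContinuousLinearMap (Matrix.mulVecLin (Lreg ω)ᵀ)) ω := by
  rw [hasFDerivAt_pi']
  intro i
  have h0 := hasFDerivAt_apply (𝕜 := ℝ) (0 : Fin 3) ω
  have h1 := hasFDerivAt_apply (𝕜 := ℝ) (1 : Fin 3) ω
  have h2 := hasFDerivAt_apply (𝕜 := ℝ) (2 : Fin 3) ω
  fin_cases i <;>
  [ convert ((h0.mul h0).const_smul ((2:ℝ)⁻¹)) using 2;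
    convert ((h1.mul h1).const_smul ((2:ℝ)⁻¹)) using 2;
    convert ((h2.mul h2).const_smul ((2:ℝ)⁻¹)) using 2;
    convert h1.mul h2 using 2;
    convert h0.mul h2 using 2;
    convert h0.mul h1 using 2 ] <;>
  first
  | (ext v;
     simp [omegaBar, Lreg, Matrix.mulVec, Matrix.vecMul, dotProduct,
       Fin.sum_univ_succ, Matrix.vecHead,
       Matrix.vecTail, vsix0, vsix1, vsix2, vsix3, vsix4, vsix5, vth0, vth1, vth2,
       Function.comp];
     ring)
  | (simp [omegaBar, smul_eq_mul, vsix0, vsix1, vsix2, vsix3, vsix4, vsix5]; ring)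
  | simp [omegaBar, smul_eq_mul, vsix0, vsix1, vsix2, vsix3, vsix4, vsix5]
  | rfl

/-- `μ₁(ω) = L(y)ᵀ ω + k_p ω̄(ω)` is differentiable with Jacobian
`(k_p L(ω) + L(y))ᵀ`, i.e. it solves the PDE `∂μ₁/∂ω = Φ₁ᵀ(ω, y)` (Eq. (19)). -/
theorem stmt14 (y : Fin 3 → ℝ) (kp : ℝ) (ω : Fin 3 → ℝ) :
    HasFDerivAt (fun w : Fin 3 → ℝ => (Lreg y)ᵀ *ᵥ w + kp • omegaBar w)
      (LinearMap.toContinuousLinearMap (Matrix.mulVecLin (kp • Lreg ω + Lreg y)ᵀ)) ω := by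
  have hlin : HasFDerivAt (fun w : Fin 3 → ℝ => (Lreg y)ᵀ *ᵥ w)
      (LinearMap.toContinuousLinearMap (Matrix.mulVecLin (Lreg y)ᵀ)) ω :=
    (LinearMap.toContinuousLinearMap (Matrix.mulVecLin (Lreg y)ᵀ)).hasFDerivAt
  have h := hlin.add ((omegaBar_hasFDerivAt ω).const_smul kp)
  refine h.congr_fderiv ?_
  ext v i
  fin_cases i <;>
    simp [Matrix.mulVec, Lreg, Fin.sum_univ_succ, Matrix.vecHead, Matrix.vecTail,
      vsix0, vsix1, vsix2, vsix3, vsix4, vsix5, vth0, vth1, vth2, Function.comp] <;> ring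
end

section
/- Let δ ∈ (0,1), α > 0, η > 0, γ > 0, and set α̲ = min(1, α) and ᾱ = -α·ln(δ²)/(1-δ²). Then for every real q with δ ≤ |q| ≤ 1 and all vectors s ∈ ℝ³, w ∈ ℝ³, z ∈ ℝ⁶, the quantity V = -α·ln(q²) + (1/2)‖s‖² + (1/2)‖w‖² + (η/(2γ))‖z‖² satisfies ς̲·Z² ≤ V ≤ ς̄·Z², where Z² = (1-q²) + ‖s‖² + ‖w‖² + ‖z‖², ς̲ = min{α̲, 1/2, η/(2γ)}, and ς̄ = max{ᾱ, 1/2, η/(2γ)}. -/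
lemma log_chord {d x : ℝ} (hd0 : 0 < d) (hd1 : d < 1) (hx1 : d ≤ x) (hx2 : x ≤ 1) :
    (1 - x) / (1 - d) * Real.log d ≤ Real.log x := by
  set t : ℝ := (1 - x) / (1 - d) with ht
  have hden : (0:ℝ) < 1 - d := by linarith
  have ht0 : 0 ≤ t := div_nonneg (by linarith) hden.le
  have ht1 : t ≤ 1 := (div_le_one hden).2 (by linarith)
  have hx : t * d + (1 - t) * 1 = x := by
    have h1 : t * (1 - d) = 1 - x := by rw [ht]; exact div_mul_cancel₀ _ hden.ne'
    linear_combination -h1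
  have hcc := (strictConcaveOn_log_Ioi.concaveOn).2 (Set.mem_Ioi.2 hd0)
    (Set.mem_Ioi.2 one_pos) ht0 (by linarith) (by ring : t + (1 - t) = 1)
  simp only [smul_eq_mul, Real.log_one, mul_zero, add_zero, mul_one] at hcc
  calc t * Real.log d ≤ Real.log (t * d + (1 - t) * 1) := by
        simpa [mul_one] using hcc
    _ = Real.log x := by rw [hx]

set_option maxHeartbeats 800000 in
/-- Quadratic sandwich bound (Eq. (67)) on the composite Lyapunov function
`V = -α ln(q²) + ½‖s‖² + ½‖w‖² + (η/(2γ))‖z‖²` with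
`Z² = (1-q²) + ‖s‖² + ‖w‖² + ‖z‖²`,
`ς̲ = min{min(1,α), 1/2, η/(2γ)}` and `ς̄ = max{-α ln(δ²)/(1-δ²), 1/2, η/(2γ)}`,
valid on the set `δ ≤ |q| ≤ 1`. -/
theorem stmt18 (δ α η γ : ℝ) (hδ : δ ∈ Set.Ioo (0 : ℝ) 1) (hα : 0 < α)
    (hη : 0 < η) (hγ : 0 < γ)
    (q : ℝ) (hq1 : δ ≤ |q|) (hq2 : |q| ≤ 1)
    (s w : EuclideanSpace ℝ (Fin 3)) (z : EuclideanSpace ℝ (Fin 6)) :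
    min (min (min 1 α) (1 / 2)) (η / (2 * γ))
        * ((1 - q ^ 2) + ‖s‖ ^ 2 + ‖w‖ ^ 2 + ‖z‖ ^ 2)
      ≤ -α * Real.log (q ^ 2) + 1 / 2 * ‖s‖ ^ 2 + 1 / 2 * ‖w‖ ^ 2
          + η / (2 * γ) * ‖z‖ ^ 2 ∧
    -α * Real.log (q ^ 2) + 1 / 2 * ‖s‖ ^ 2 + 1 / 2 * ‖w‖ ^ 2
          + η / (2 * γ) * ‖z‖ ^ 2
      ≤ max (max (-α * Real.log (δ ^ 2) / (1 - δ ^ 2)) (1 / 2)) (η / (2 * γ))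
          * ((1 - q ^ 2) + ‖s‖ ^ 2 + ‖w‖ ^ 2 + ‖z‖ ^ 2) := by
  obtain ⟨hδ0, hδ1⟩ := hδ
  have hd0 : (0:ℝ) < δ ^ 2 := by positivity
  have hd1 : δ ^ 2 < 1 := by nlinarith
  have hx1 : δ ^ 2 ≤ q ^ 2 := by
    have := sq_abs q; nlinarith [sq_abs q, sq_nonneg (|q| - δ)]
  have hx2 : q ^ 2 ≤ 1 := by nlinarith [sq_abs q, abs_nonneg q]
  have hx0 : (0:ℝ) < q ^ 2 := lt_of_lt_of_le hd0 hx1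
  have hS : (0:ℝ) ≤ ‖s‖ ^ 2 := by positivity
  have hW : (0:ℝ) ≤ ‖w‖ ^ 2 := by positivity
  have hZ : (0:ℝ) ≤ ‖z‖ ^ 2 := by positivity
  have hc : (0:ℝ) < η / (2 * γ) := by positivity
  set m := min (min (min 1 α) (1 / 2)) (η / (2 * γ)) with hm
  set M := max (max (-α * Real.log (δ ^ 2) / (1 - δ ^ 2)) (1 / 2)) (η / (2 * γ)) with hM
  have hm1 : m ≤ α := le_trans (le_trans (min_le_left _ _) (min_le_left _ _)) (min_le_right _ _)
  have hm2 : m ≤ 1 / 2 := le_trans (min_le_left _ _) (min_le_right _ _)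
  have hm3 : m ≤ η / (2 * γ) := min_le_right _ _
  have hM1 : -α * Real.log (δ ^ 2) / (1 - δ ^ 2) ≤ M :=
    le_trans (le_max_left _ _) (le_max_left _ _)
  have hM2 : (1:ℝ) / 2 ≤ M := le_trans (le_max_right _ _) (le_max_left _ _)
  have hM3 : η / (2 * γ) ≤ M := le_max_right _ _
  -- lower bound on -α log q²
  have hlog1 : Real.log (q ^ 2) ≤ q ^ 2 - 1 := Real.log_le_sub_one_of_pos hx0
  have hlow : α * (1 - q ^ 2) ≤ -α * Real.log (q ^ 2) := by nlinarith
  -- upper bound via chord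
  have hchord := log_chord hd0 hd1 hx1 hx2
  have hup : -α * Real.log (q ^ 2) ≤ -α * Real.log (δ ^ 2) / (1 - δ ^ 2) * (1 - q ^ 2) := by
    have h : -Real.log (q ^ 2) ≤ (1 - q ^ 2) / (1 - δ ^ 2) * (-Real.log (δ ^ 2)) := by
      nlinarith [hchord]
    have := mul_le_mul_of_nonneg_left h hα.le
    calc -α * Real.log (q ^ 2) = α * (-Real.log (q ^ 2)) := by ring
      _ ≤ α * ((1 - q ^ 2) / (1 - δ ^ 2) * (-Real.log (δ ^ 2))) := this
      _ = -α * Real.log (δ ^ 2) / (1 - δ ^ 2) * (1 - q ^ 2) := by ring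
  constructor
  · have hq0 : (0:ℝ) ≤ 1 - q ^ 2 := by linarith
    nlinarith [mul_le_mul_of_nonneg_right hm1 hq0, mul_le_mul_of_nonneg_right hm2 hS,
      mul_le_mul_of_nonneg_right hm2 hW, mul_le_mul_of_nonneg_right hm3 hZ]
  · have hq0 : (0:ℝ) ≤ 1 - q ^ 2 := by linarith
    nlinarith [mul_le_mul_of_nonneg_right hM1 hq0, mul_le_mul_of_nonneg_right hM2 hS,
      mul_le_mul_of_nonneg_right hM2 hW, mul_le_mul_of_nonneg_right hM3 hZ]
end
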